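/- If Λ is an ε-non-entangling map and Ω is a δ-non-entangling map (i.e. they map every separable state to a state of global robustness at most ε, respectively δ), then the composition Λ ∘ Ω is an (ε + δ + εδ)-non-entangling map. -/

import Mathlib

open Matrix ComplexOrder

/-- A quantum state: a positive semidefinite operator of unit trace. -/
def IsState {n : Type*} [Fintype n] [DecidableEq n] (ρ : Matrix n n ℂ) : Prop :=
  ρ.PosSemidef ∧ ρ.trace = 1

/-- The tensor product of m single-party operators. -/
def prodMat {m : ℕ} {d : Fin m → ℕ} (σ : ∀ i, Matrix (Fin (d i)) (Fin (d i)) ℂ) :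
    Matrix (∀ i, Fin (d i)) (∀ i, Fin (d i)) ℂ :=
  Matrix.of fun x y => ∏ i, σ i (x i) (y i)

/-- Fully separable states: convex combinations of product states. -/
def IsSepState {m : ℕ} {d : Fin m → ℕ}
    (ρ : Matrix (∀ i, Fin (d i)) (∀ i, Fin (d i)) ℂ) : Prop :=
  ∃ (N : ℕ) (p : Fin N → ℝ) (σ : Fin N → ∀ i, Matrix (Fin (d i)) (Fin (d i)) ℂ),
    (∀ j, 0 ≤ p j) ∧ (∑ j, p j = 1) ∧
    (∀ j i, (σ j i).PosSemidef ∧ (σ j i).trace = 1) ∧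
    ρ = ∑ j, (p j : ℂ) • prodMat (σ j)

/-- The global robustness of entanglement. -/
noncomputable def RG {m : ℕ} {d : Fin m → ℕ}
    (ρ : Matrix (∀ i, Fin (d i)) (∀ i, Fin (d i)) ℂ) : ℝ :=
  sInf { s : ℝ | 0 ≤ s ∧ ∃ π, IsState π ∧ IsSepState ((1 + s)⁻¹ • (ρ + s • π)) }

/-- A completely positive (Kraus form) trace-preserving map. -/
def IsCPTP {n : Type*} [Fintype n] [DecidableEq n]
    (Λ : Matrix n n ℂ →ₗ[ℂ] Matrix n n ℂ) : Prop :=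
  (∃ (N : ℕ) (K : Fin N → Matrix n n ℂ), ∀ X, Λ X = ∑ i, K i * X * (K i)ᴴ) ∧
    (∀ X, (Λ X).trace = X.trace)

/-- An η-non-entangling CPTP map: every separable state is mapped to a state of global
robustness at most η. -/
def IsNonEntangling {m : ℕ} {d : Fin m → ℕ}
    (Λ : Matrix (∀ i, Fin (d i)) (∀ i, Fin (d i)) ℂ →ₗ[ℂ]
         Matrix (∀ i, Fin (d i)) (∀ i, Fin (d i)) ℂ) (η : ℝ) : Prop :=
  IsCPTP Λ ∧ ∀ σ, IsState σ → IsSepState σ → RG (Λ σ) ≤ η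

/-! Write `s ∈ robustnessSet ρ` as `ρ + s • π = (1 + s) • τ` with `π` a state and `τ` separable.
An `ε`-non-entangling `Λ` turns this into `Λ ρ + s • Λ π = (1 + s) • Λ τ`, and any decomposition
`Λ τ + t • π₂ = (1 + t) • ω` of the image of the separable state `τ` combines with it, after
merging the two noise terms into one state, into a decomposition of `Λ ρ` of weight `s + t + s t`,
where `1 + (s + t + s t) = (1 + s) (1 + t)`. Taking infima gives
`1 + RG (Λ ρ) ≤ (1 + ε) (1 + RG ρ)`, the multiplicative form of
`LR_G (Λ ρ) ≤ log (1 + ε) + LR_G ρ`, and along a composition these factors multiply: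
`(1 + ε) (1 + δ) = 1 + (ε + δ + ε δ)`. -/

section States
variable {n : Type*} [Fintype n] [DecidableEq n]

lemma isState_inv_smul {A : Matrix n n ℂ} (hA : A.PosSemidef) {c : ℝ} (hc : 0 < c)
    (htr : A.trace = c) : IsState (c⁻¹ • A) := by
  refine ⟨hA.smul (inv_nonneg.2 hc.le), ?_⟩
  rw [trace_smul, htr, Complex.real_smul, Complex.ofReal_inv,
    inv_mul_cancel₀ (Complex.ofReal_ne_zero.2 hc.ne')]

lemma exists_isState_smul_add_smul_eq {A B : Matrix n n ℂ} (hA : IsState A) (hB : IsState B)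
    {a b : ℝ} (ha : 0 ≤ a) (hb : 0 ≤ b) : ∃ C, IsState C ∧ a • A + b • B = (a + b) • C := by
  rcases (add_nonneg ha hb).eq_or_lt with hab | hab
  · obtain ⟨rfl, rfl⟩ : a = 0 ∧ b = 0 := ⟨by linarith, by linarith⟩
    exact ⟨A, hA, by simp⟩
  · refine ⟨(a + b)⁻¹ • (a • A + b • B),
      isState_inv_smul ((hA.1.smul ha).add (hB.1.smul hb)) hab ?_, (smul_inv_smul₀ hab.ne' _).symm⟩
    simp [trace_smul, hA.2, hB.2, Complex.real_smul]

lemma isState_of_add_smul_eq {ρ π τ : Matrix n n ℂ} (hρ : IsState ρ) (hπ : IsState π) {s : ℝ}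
    (hs : 0 ≤ s) (h : ρ + s • π = (1 + s) • τ) : IsState τ := by
  obtain ⟨C, hC, hCeq⟩ := exists_isState_smul_add_smul_eq hρ hπ zero_le_one hs
  rw [one_smul, h] at hCeq
  exact smul_right_injective _ (by positivity : (1 + s) ≠ 0) hCeq ▸ hC

open scoped MatrixOrder in
lemma IsState.posSemidef_one_sub {ρ : Matrix n n ℂ} (hρ : IsState ρ) : (1 - ρ).PosSemidef := by
  obtain ⟨hpsd, htr⟩ := hρ
  have hsum : ∑ i, hpsd.1.eigenvalues i = 1 := by
    have := hpsd.1.trace_eq_sum_eigenvalues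
    rw [htr] at this
    exact Complex.ofReal_injective (by push_cast; exact this.symm)
  refine le_iff.mp (CFC.le_one (R := ℝ) (fun x hx => ?_) hpsd.1.isSelfAdjoint)
  obtain ⟨i, rfl⟩ := hpsd.1.spectrum_real_eq_range_eigenvalues ▸ hx
  exact hsum ▸ Finset.single_le_sum (fun j _ => hpsd.eigenvalues_nonneg j) (Finset.mem_univ i)

lemma IsCPTP.posSemidef_map {Λ : Matrix n n ℂ →ₗ[ℂ] Matrix n n ℂ} (hΛ : IsCPTP Λ)
    {ρ : Matrix n n ℂ} (hρ : ρ.PosSemidef) : (Λ ρ).PosSemidef := by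
  obtain ⟨⟨N, K, hK⟩, -⟩ := hΛ
  rw [hK]
  exact posSemidef_sum _ fun i _ => hρ.mul_mul_conjTranspose_same (K i)

lemma IsCPTP.isState_map {Λ : Matrix n n ℂ →ₗ[ℂ] Matrix n n ℂ} (hΛ : IsCPTP Λ)
    {ρ : Matrix n n ℂ} (hρ : IsState ρ) : IsState (Λ ρ) :=
  ⟨hΛ.posSemidef_map hρ.1, (hΛ.2 ρ).trans hρ.2⟩

lemma IsCPTP.comp {Λ Ω : Matrix n n ℂ →ₗ[ℂ] Matrix n n ℂ} (hΛ : IsCPTP Λ) (hΩ : IsCPTP Ω) :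
    IsCPTP (Λ ∘ₗ Ω) := by
  obtain ⟨⟨N, K, hK⟩, hΛtr⟩ := hΛ
  obtain ⟨⟨M, L, hL⟩, hΩtr⟩ := hΩ
  refine ⟨⟨N * M, fun k => K (finProdFinEquiv.symm k).1 * L (finProdFinEquiv.symm k).2,
    fun X => ?_⟩, fun X => by rw [LinearMap.comp_apply, hΛtr, hΩtr]⟩
  rw [LinearMap.comp_apply, hK, hL, Equiv.sum_comp finProdFinEquiv.symm
    (fun p => K p.1 * L p.2 * X * (K p.1 * L p.2)ᴴ), Fintype.sum_prod_type]
  simp only [Finset.mul_sum, Finset.sum_mul, conjTranspose_mul, Matrix.mul_assoc]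

end States

section Multipartite
variable {m : ℕ} {d : Fin m → ℕ}

lemma prodMat_smul (c : Fin m → ℝ) (σ : ∀ i, Matrix (Fin (d i)) (Fin (d i)) ℂ) :
    prodMat (fun i => c i • σ i) = (∏ i, c i) • prodMat σ := by
  ext x y
  simp [prodMat, Complex.real_smul, Finset.prod_mul_distrib]

lemma prodMat_one : prodMat (fun i => (1 : Matrix (Fin (d i)) (Fin (d i)) ℂ)) = 1 := by
  ext x y
  simp [prodMat, one_apply, Fintype.prod_boole, funext_iff]

lemma isSepState_prodMat {σ : ∀ i, Matrix (Fin (d i)) (Fin (d i)) ℂ} (hσ : ∀ i, IsState (σ i)) :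
    IsSepState (prodMat σ) :=
  ⟨1, fun _ => 1, fun _ => σ, fun _ => zero_le_one, by simp, fun _ i => hσ i, by simp⟩

lemma isSepState_maximallyMixed (h : Fintype.card (∀ i, Fin (d i)) ≠ 0) :
    IsSepState ((Fintype.card (∀ i, Fin (d i)) : ℝ)⁻¹ •
      (1 : Matrix (∀ i, Fin (d i)) (∀ i, Fin (d i)) ℂ)) := by
  rw [Fintype.card_pi, Finset.prod_ne_zero_iff] at h
  have hd : ∀ i, (0 : ℝ) < d i := fun i => by simpa [Nat.pos_iff_ne_zero] using h i
  have hmix : ∀ i, IsState (((d i : ℝ))⁻¹ • (1 : Matrix (Fin (d i)) (Fin (d i)) ℂ)) :=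
    fun i => isState_inv_smul PosSemidef.one (hd i) (by simp)
  convert isSepState_prodMat hmix using 1
  rw [prodMat_smul, prodMat_one, Fintype.card_pi]
  simp

end Multipartite

section Robustness
variable {m : ℕ} {d : Fin m → ℕ}

def robustnessSet (ρ : Matrix (∀ i, Fin (d i)) (∀ i, Fin (d i)) ℂ) : Set ℝ :=
  { s : ℝ | 0 ≤ s ∧ ∃ π, IsState π ∧ IsSepState ((1 + s)⁻¹ • (ρ + s • π)) }

lemma mem_robustnessSet_iff {ρ : Matrix (∀ i, Fin (d i)) (∀ i, Fin (d i)) ℂ} {s : ℝ} :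
    s ∈ robustnessSet ρ ↔
      0 ≤ s ∧ ∃ π, IsState π ∧ ∃ ω, IsSepState ω ∧ ρ + s • π = (1 + s) • ω := by
  refine and_congr_right fun hs => exists_congr fun π => and_congr_right fun _ => ?_
  have hs₁ : (1 + s) ≠ 0 := by positivity
  exact ⟨fun h => ⟨_, h, (inv_smul_eq_iff₀ hs₁).mp rfl⟩,
    fun ⟨ω, hω, h⟩ => (inv_smul_eq_iff₀ hs₁).mpr h ▸ hω⟩

lemma RG_le {ρ : Matrix (∀ i, Fin (d i)) (∀ i, Fin (d i)) ℂ} {s : ℝ}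
    (hs : s ∈ robustnessSet ρ) : RG ρ ≤ s :=
  csInf_le ⟨0, fun _ ht => ht.1⟩ hs

/-- A state satisfies `ρ ≤ 1`, so enough noise turns it into the maximally mixed state; this keeps
`RG` away from the junk value `sInf ∅ = 0`. -/
lemma robustnessSet_nonempty {ρ : Matrix (∀ i, Fin (d i)) (∀ i, Fin (d i)) ℂ}
    (hρ : IsState ρ) : (robustnessSet ρ).Nonempty := by
  set D : ℝ := (Fintype.card (∀ i, Fin (d i)) : ℝ)
  have hcard : Fintype.card (∀ i, Fin (d i)) ≠ 0 := by
    intro h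
    have : IsEmpty (∀ i, Fin (d i)) := Fintype.card_eq_zero_iff.mp h
    simpa [trace] using hρ.2
  have hD : 0 < D := by positivity
  have htr : ((1 - ρ) + D⁻¹ • 1).trace = D := by
    have : (D : ℂ) ≠ 0 := Complex.ofReal_ne_zero.mpr hD.ne'
    simp only [trace_add, trace_sub, trace_smul, trace_one, hρ.2, Complex.real_smul]
    push_cast [D] at this ⊢
    field_simp
    ring
  have hπ : IsState (D⁻¹ • ((1 - ρ) + D⁻¹ • 1)) :=
    isState_inv_smul (hρ.posSemidef_one_sub.add (PosSemidef.one.smul (by positivity))) hD htr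
  refine ⟨D, mem_robustnessSet_iff.mpr ⟨hD.le, _, hπ, _, isSepState_maximallyMixed hcard, ?_⟩⟩
  change ρ + D • _ = (1 + D) • (D⁻¹ • 1)
  simp only [smul_inv_smul₀ hD.ne', add_smul, one_smul]
  abel

lemma le_mul_one_add_RG {ρ : Matrix (∀ i, Fin (d i)) (∀ i, Fin (d i)) ℂ} (hρ : IsState ρ)
    {a c : ℝ} (hc : 0 < c) (h : ∀ s ∈ robustnessSet ρ, a ≤ c * (1 + s)) :
    a ≤ c * (1 + RG ρ) := by
  have hinf : a / c - 1 ≤ RG ρ := le_csInf (robustnessSet_nonempty hρ) fun s hs => by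
    rw [sub_le_iff_le_add, div_le_iff₀ hc]
    linarith [h s hs]
  rw [sub_le_iff_le_add, div_le_iff₀ hc] at hinf
  linarith

lemma add_add_mul_mem_robustnessSet_map
    {Λ : Matrix (∀ i, Fin (d i)) (∀ i, Fin (d i)) ℂ →ₗ[ℂ]
      Matrix (∀ i, Fin (d i)) (∀ i, Fin (d i)) ℂ} (hΛ : IsCPTP Λ)
    {ρ π τ : Matrix (∀ i, Fin (d i)) (∀ i, Fin (d i)) ℂ} {s t : ℝ} (hs : 0 ≤ s)
    (hπ : IsState π) (hρτ : ρ + s • π = (1 + s) • τ) (ht : t ∈ robustnessSet (Λ τ)) :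
    s + t + s * t ∈ robustnessSet (Λ ρ) := by
  obtain ⟨ht, π₂, hπ₂, ω, hω, hτω⟩ := mem_robustnessSet_iff.mp ht
  obtain ⟨π', hπ', hπ'eq⟩ :=
    exists_isState_smul_add_smul_eq (hΛ.isState_map hπ) hπ₂ hs (by positivity : 0 ≤ (1 + s) * t)
  refine mem_robustnessSet_iff.mpr ⟨by positivity, π', hπ', ω, hω, ?_⟩
  have hΛρτ : Λ ρ + s • Λ π = (1 + s) • Λ τ := by
    rw [← LinearMap.map_smul_of_tower, ← map_add, hρτ, LinearMap.map_smul_of_tower]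
  calc Λ ρ + (s + t + s * t) • π' = Λ ρ + (s + (1 + s) * t) • π' := by ring_nf
    _ = (Λ ρ + s • Λ π) + ((1 + s) * t) • π₂ := by rw [← hπ'eq, add_assoc]
    _ = (1 + s) • (Λ τ + t • π₂) := by rw [hΛρτ, smul_add, smul_smul]
    _ = (1 + (s + t + s * t)) • ω := by rw [hτω, smul_smul]; ring_nf

lemma IsNonEntangling.one_add_RG_map_le
    {Λ : Matrix (∀ i, Fin (d i)) (∀ i, Fin (d i)) ℂ →ₗ[ℂ]
      Matrix (∀ i, Fin (d i)) (∀ i, Fin (d i)) ℂ} {ε : ℝ} (hΛ : IsNonEntangling Λ ε)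
    (hε : 0 ≤ ε) {ρ : Matrix (∀ i, Fin (d i)) (∀ i, Fin (d i)) ℂ} (hρ : IsState ρ) :
    1 + RG (Λ ρ) ≤ (1 + ε) * (1 + RG ρ) := by
  refine le_mul_one_add_RG hρ (by linarith) fun s hs => ?_
  obtain ⟨hs, π, hπ, τ, hτ, hρτ⟩ := mem_robustnessSet_iff.mp hs
  have hτstate : IsState τ := isState_of_add_smul_eq hρ hπ hs hρτ
  calc 1 + RG (Λ ρ) ≤ (1 + s) * (1 + RG (Λ τ)) :=
        le_mul_one_add_RG (hΛ.1.isState_map hτstate) (by positivity) fun t ht => by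
          have := RG_le (add_add_mul_mem_robustnessSet_map hΛ.1 hs hπ hρτ ht)
          linarith
    _ ≤ (1 + s) * (1 + ε) := by gcongr; exact hΛ.2 τ hτstate hτ
    _ = (1 + ε) * (1 + s) := mul_comm _ _

end Robustness

theorem comp_nonEntangling_general {m : ℕ} {d : Fin m → ℕ}
    (Λ Ω : Matrix (∀ i, Fin (d i)) (∀ i, Fin (d i)) ℂ →ₗ[ℂ]
           Matrix (∀ i, Fin (d i)) (∀ i, Fin (d i)) ℂ)
    (ε δ : ℝ) (hε : 0 ≤ ε)
    (hΛ : IsNonEntangling Λ ε) (hΩ : IsNonEntangling Ω δ) :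
    IsNonEntangling (Λ ∘ₗ Ω) (ε + δ + ε * δ) := by
  refine ⟨hΛ.1.comp hΩ.1, fun σ hσ hσsep => ?_⟩
  have hΛΩσ := hΛ.one_add_RG_map_le hε (hΩ.1.isState_map hσ)
  have hΩσ : RG (Ω σ) ≤ δ := hΩ.2 σ hσ hσsep
  calc RG ((Λ ∘ₗ Ω) σ) ≤ (1 + ε) * (1 + RG (Ω σ)) - 1 := by
        rw [LinearMap.comp_apply]; linarith
    _ ≤ (1 + ε) * (1 + δ) - 1 := by gcongr
    _ = ε + δ + ε * δ := by ring

/-- the composition of an ε-non-entangling map with a δ-non-entangling map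
is (ε + δ + εδ)-non-entangling. -/
theorem comp_nonEntangling {m : ℕ} {d : Fin m → ℕ}
    (Λ Ω : Matrix (∀ i, Fin (d i)) (∀ i, Fin (d i)) ℂ →ₗ[ℂ]
           Matrix (∀ i, Fin (d i)) (∀ i, Fin (d i)) ℂ)
    (ε δ : ℝ) (hε : 0 ≤ ε) (hδ : 0 ≤ δ)
    (hΛ : IsNonEntangling Λ ε) (hΩ : IsNonEntangling Ω δ) :
    IsNonEntangling (Λ ∘ₗ Ω) (ε + δ + ε * δ) :=
  comp_nonEntangling_general Λ Ω ε δ hε hΛ hΩ
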